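/- arXiv:2601.00265 — 3 statements merged into one kernel-verified Lean document; each statement's English description precedes it below -/
import Mathlib

section
/- Let h : [−π, π] → ℝ be an even integrable function with ∫_{−π}^{π} |h(λ)|/(1 − cos λ) dλ < ∞, and define the outer function Q(z) = exp((1/2π)∫_{−π}^{π} ((e^{iλ} + z)/(e^{iλ} − z))·h(λ) dλ) for |z| < 1. Then Q is analytic on the open unit disk, lim_{r→1⁻} Q(r) = 1, and the group delay GD(Q) := lim_{r→1⁻} (Q(r) − 1)/(r − 1) exists and equals −(1/2π)∫_{−π}^{π} h(λ)/(1 − cos λ) dλ. Consequently, setting σ_S²(Q) = exp((1/π)∫_{−π}^{π} h(λ) dλ) (Kolmogorov's one-step mean squared forecast error for the outer function with boundary modulus e^{h}) and c = (1/2π)∫_{−π}^{π} (cos λ/(1 − cos λ))·h(λ) dλ, one has the exact exponential relation σ_S²(Q) = exp(−2·GD(Q) − 2c); in particular the supplier's forecast error is controlled exponentially by the group delay of the outer factor. -/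
/-!
For real `r ∈ (-1, 1)` the kernels at `l` and `-l` add up to twice the Poisson kernel, so for even
`h` the Herglotz integral is real there:
`Q(r) = exp((1 - r) I(r) / 2π)` with `I(r) = ∫ (1 + r) h(l) / (1 - 2 r cos l + r²) dl`.
As `1 - 2 r cos l + r² = (1 - r)² + 2 r (1 - cos l) ≥ 1 - cos l` for `r ≥ 1/2`, dominated convergence
with the weight `|h| / (1 - cos l)` gives `I(r) → ∫ h / (1 - cos l)`, and then
`(Q(r) - 1) / (r - 1) → GD` because `exp w - 1 ~ w`. Analyticity of `Q` is that of the
Herglotz–Riesz integral, once `h` is moved to the circle as `h ∘ arg`. The last identity is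
`cos l / (1 - cos l) = 1 / (1 - cos l) - 1`, valid off the null set `cos l = 1`.
-/

open MeasureTheory intervalIntegral Filter Set Metric Topology Real

noncomputable def herglotzKernel (z : ℂ) (l : ℝ) : ℂ :=
  (Complex.exp (Complex.I * l) + z) / (Complex.exp (Complex.I * l) - z)

noncomputable def herglotzIntegral (h : ℝ → ℝ) (z : ℂ) : ℂ :=
  ∫ l in (-π)..π, herglotzKernel z l * (h l : ℂ)

theorem IntervalIntegrable.ofReal {f : ℝ → ℝ} {a b : ℝ}
    (hf : IntervalIntegrable f volume a b) :
    IntervalIntegrable (fun x => (f x : ℂ)) volume a b :=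
  ⟨hf.1.ofReal, hf.2.ofReal⟩

theorem integral_circleMap_neg_pi_pi {E : Type*} [NormedAddCommGroup E] [NormedSpace ℝ E]
    (F : ℂ → E) (c : ℂ) (R : ℝ) :
    ∫ θ in (-π)..π, F (circleMap c R θ) = (2 * π) • circleAverage F c R := by
  have hper : Function.Periodic (fun θ => F (circleMap c R θ)) (2 * π) := fun θ => by
    simp only [periodic_circleMap c R θ]
  rw [circleAverage_def, smul_inv_smul₀ two_pi_pos.ne', ← zero_add (2 * π),
    ← hper.intervalIntegral_add_eq (-π) 0]
  ring_nf

theorem arg_circleMap_zero_one {θ : ℝ} (hθ : θ ∈ Ioc (-π) π) : (circleMap 0 1 θ).arg = θ := by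
  rw [circleMap_zero, Complex.ofReal_one, one_mul, Complex.arg_exp_mul_I, toIocMod_eq_self]
  simpa [neg_add_eq_sub, show 2 * π - π = π by ring] using hθ

theorem herglotzIntegral_eq_circleAverage (h : ℝ → ℝ) (z : ℂ) :
    herglotzIntegral h z =
      (2 * π) • circleAverage (fun ζ => herglotzRieszKernel 0 z ζ • (h ζ.arg : ℂ)) 0 1 := by
  rw [← integral_circleMap_neg_pi_pi, herglotzIntegral]
  refine integral_congr_ae (ae_of_all _ fun θ hθ => ?_)
  rw [uIoc_of_le (by linarith [pi_pos])] at hθ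
  rw [arg_circleMap_zero_one hθ]
  simp only [herglotzKernel, herglotzRieszKernel_def, circleMap_zero, sub_zero,
    Complex.ofReal_one, one_mul, mul_comm Complex.I, smul_eq_mul]

theorem circleIntegrable_ofReal_comp_arg {h : ℝ → ℝ}
    (hint : IntervalIntegrable h volume (-π) π) :
    CircleIntegrable (fun ζ => (h ζ.arg : ℂ)) 0 1 := by
  have hper : Function.Periodic (fun θ => (h (circleMap 0 1 θ).arg : ℂ)) (2 * π) := fun θ => by
    simp only [periodic_circleMap 0 1 θ]
  rw [CircleIntegrable, ← zero_add (2 * π), hper.intervalIntegrable_iff (t₂ := -π),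
    show -π + 2 * π = π by ring]
  refine hint.ofReal.congr fun θ hθ => ?_
  rw [uIoc_of_le (by linarith [pi_pos])] at hθ
  simp only [arg_circleMap_zero_one hθ]

theorem analyticOnNhd_herglotzIntegral {h : ℝ → ℝ}
    (hint : IntervalIntegrable h volume (-π) π) :
    AnalyticOnNhd ℂ (herglotzIntegral h) (ball 0 1) := by
  rw [show herglotzIntegral h = _ from funext (herglotzIntegral_eq_circleAverage h)]
  exact (analyticOnNhd_circleAverage_herglotzRieszKernel_smul
    (circleIntegrable_ofReal_comp_arg hint)).const_smul (c := 2 * π)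

theorem cexp_I_mul_sub_ne_zero {z : ℂ} (hz : ‖z‖ < 1) (l : ℝ) :
    Complex.exp (Complex.I * l) - z ≠ 0 := by
  intro he
  rw [← sub_eq_zero.1 he, Complex.norm_exp_I_mul_ofReal] at hz
  exact hz.false

theorem continuous_herglotzKernel {z : ℂ} (hz : ‖z‖ < 1) : Continuous (herglotzKernel z) :=
  Continuous.div (by fun_prop) (by fun_prop) (cexp_I_mul_sub_ne_zero hz)

theorem herglotzKernel_add_herglotzKernel_neg {r : ℝ} (hr : |r| < 1) (l : ℝ) :
    herglotzKernel r l + herglotzKernel r (-l) =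
      ((2 * ((1 - r ^ 2) / (1 - 2 * r * cos l + r ^ 2)) : ℝ) : ℂ) := by
  have hr' : ‖(r : ℂ)‖ < 1 := by rwa [Complex.norm_real, Real.norm_eq_abs]
  have ha := cexp_I_mul_sub_ne_zero hr' l
  have hb := cexp_I_mul_sub_ne_zero hr' (-l)
  have hab : Complex.exp (Complex.I * l) * Complex.exp (Complex.I * (-l : ℝ)) = 1 := by
    rw [← Complex.exp_add]; push_cast; ring_nf; exact Complex.exp_zero
  have hcos : 2 * Complex.cos l =
      Complex.exp (Complex.I * l) + Complex.exp (Complex.I * (-l : ℝ)) := by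
    rw [Complex.two_cos]; push_cast; ring_nf
  unfold herglotzKernel
  generalize Complex.exp (Complex.I * l) = a at *
  generalize Complex.exp (Complex.I * (-l : ℝ)) = b at *
  -- `b = a⁻¹ = conj a`, so the denominator `1 - 2 r cos l + r²` is `|a - r|²`
  have hden : 1 - 2 * r * Complex.cos l + r ^ 2 = (a - r) * (b - r) := by
    linear_combination (-r : ℂ) * hcos - hab
  push_cast
  rw [hden]
  field_simp
  linear_combination 2 * hab

theorem two_mul_integral_mul_of_even {F g : ℝ → ℂ} {a : ℝ} (hF : Continuous F)
    (hg : IntervalIntegrable g volume (-a) a) (heven : ∀ l, g (-l) = g l) :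
    2 * ∫ l in (-a)..a, F l * g l = ∫ l in (-a)..a, (F l + F (-l)) * g l := by
  have hflip : ∫ l in (-a)..a, F (-l) * g l = ∫ l in (-a)..a, F l * g l := by
    simpa only [heven, neg_neg] using integral_comp_neg (a := -a) (b := a) fun l => F l * g l
  simp_rw [add_mul]
  rw [intervalIntegral.integral_add (hg.continuousOn_mul hF.continuousOn)
    (hg.continuousOn_mul (by fun_prop : Continuous fun l => F (-l)).continuousOn), hflip, two_mul]

theorem herglotzIntegral_ofReal {h : ℝ → ℝ} (heven : ∀ l, h (-l) = h l)
    (hint : IntervalIntegrable h volume (-π) π) {r : ℝ} (hr : |r| < 1) :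
    herglotzIntegral h r =
      ((∫ l in (-π)..π, (1 - r ^ 2) / (1 - 2 * r * cos l + r ^ 2) * h l : ℝ) : ℂ) := by
  have hr' : ‖(r : ℂ)‖ < 1 := by rwa [Complex.norm_real, Real.norm_eq_abs]
  have := two_mul_integral_mul_of_even (continuous_herglotzKernel hr') hint.ofReal
    (by simp only [heven, implies_true])
  simp_rw [herglotzKernel_add_herglotzKernel_neg hr, ← Complex.ofReal_mul, integral_ofReal] at this
  refine mul_left_cancel₀ two_ne_zero (this.trans ?_)
  rw [← Complex.ofReal_ofNat, ← Complex.ofReal_mul, ← intervalIntegral.integral_const_mul]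
  exact congrArg _ (integral_congr fun l _ => by ring)

theorem herglotzIntegral_ofReal_eq_one_sub_mul {h : ℝ → ℝ} (heven : ∀ l, h (-l) = h l)
    (hint : IntervalIntegrable h volume (-π) π) {r : ℝ} (hr : |r| < 1) :
    herglotzIntegral h r =
      (((1 - r) * ∫ l in (-π)..π, (1 + r) / (1 - 2 * r * cos l + r ^ 2) * h l : ℝ) : ℂ) := by
  rw [herglotzIntegral_ofReal heven hint hr, ← intervalIntegral.integral_const_mul]
  exact congrArg _ (integral_congr fun l _ => by ring)

theorem ae_cos_ne_one : ∀ᵐ l : ℝ, cos l ≠ 1 := by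
  have hcount : {l : ℝ | cos l = 1}.Countable :=
    (countable_range fun n : ℤ => n * (2 * π)).mono fun l hl => (cos_eq_one_iff l).1 hl
  simpa [ae_iff] using hcount.measure_zero volume

theorem one_sub_two_mul_cos_add_sq_pos {r : ℝ} (hr : |r| < 1) (l : ℝ) :
    0 < 1 - 2 * r * cos l + r ^ 2 := by
  nlinarith [neg_one_le_cos l, cos_le_one l, le_abs_self r, neg_abs_le r, abs_mul_abs_self r]

theorem one_add_div_le_two_div_one_sub {r c : ℝ} (hr : 1 / 2 ≤ r) (hr1 : r ≤ 1) (hc : c < 1) :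
    (1 + r) / (1 - 2 * r * c + r ^ 2) ≤ 2 / (1 - c) := by
  rw [div_le_div_iff₀ (by nlinarith) (by linarith)]
  nlinarith

theorem tendsto_integral_one_add_div_mul {h : ℝ → ℝ} {a b : ℝ}
    (hint : IntervalIntegrable h volume a b)
    (hint2 : IntervalIntegrable (fun l => |h l| / (1 - cos l)) volume a b) :
    Tendsto (fun r => ∫ l in a..b, (1 + r) / (1 - 2 * r * cos l + r ^ 2) * h l) (𝓝[<] 1)
      (𝓝 (∫ l in a..b, h l / (1 - cos l))) := by
  have hr : ∀ᶠ r in 𝓝[<] (1 : ℝ), r ∈ Ioo (1 / 2) 1 := Ioo_mem_nhdsLT (by norm_num)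
  refine tendsto_integral_filter_of_dominated_convergence (fun l => 2 * (|h l| / (1 - cos l)))
    ?_ ?_ (hint2.const_mul 2) ?_
  · filter_upwards [hr] with r hr
    have hD := one_sub_two_mul_cos_add_sq_pos (r := r) (abs_lt.2 ⟨by linarith [hr.1], hr.2⟩)
    exact (hint.continuousOn_mul (Continuous.continuousOn (Continuous.div (by fun_prop)
      (by fun_prop) fun l => (hD l).ne'))).def'.aestronglyMeasurable
  · filter_upwards [hr] with r hr
    filter_upwards [ae_cos_ne_one] with l hl _
    have hc : cos l < 1 := (cos_le_one l).lt_of_ne hl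
    have hD := one_sub_two_mul_cos_add_sq_pos (abs_lt.2 ⟨by linarith [hr.1], hr.2⟩) l
    rw [norm_mul, Real.norm_eq_abs, Real.norm_eq_abs,
      abs_of_nonneg (div_nonneg (by linarith [hr.1]) hD.le)]
    calc (1 + r) / (1 - 2 * r * cos l + r ^ 2) * |h l| ≤ 2 / (1 - cos l) * |h l| :=
          mul_le_mul_of_nonneg_right (one_add_div_le_two_div_one_sub hr.1.le hr.2.le hc)
            (abs_nonneg _)
      _ = 2 * (|h l| / (1 - cos l)) := by ring
  · filter_upwards [ae_cos_ne_one] with l hl _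
    have hc : 1 - cos l ≠ 0 := sub_ne_zero.2 hl.symm
    have hcont : ContinuousAt (fun r : ℝ => (1 + r) / (1 - 2 * r * cos l + r ^ 2) * h l) 1 :=
      ((continuousAt_const.add continuousAt_id).div (by fun_prop)
        (by intro h0; apply hc; linarith)).mul continuousAt_const
    convert hcont.tendsto.mono_left nhdsWithin_le_nhds using 2
    rw [show (1 : ℝ) - 2 * 1 * cos l + 1 ^ 2 = 2 * (1 - cos l) by ring]
    field_simp
    ring

theorem tendsto_cexp_mul_sub_one_div {α : Type*} {l : Filter α} {ε v : α → ℂ} {L : ℂ}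
    (hε : Tendsto ε l (𝓝 0)) (hε0 : ∀ᶠ x in l, ε x ≠ 0) (hv : Tendsto v l (𝓝 L)) :
    Tendsto (fun x => (Complex.exp (ε x * v x) - 1) / ε x) l (𝓝 L) := by
  have hslope : Tendsto (dslope Complex.exp 0) (𝓝 0) (𝓝 1) := by
    have := (continuousAt_dslope_same.2 (Complex.differentiableAt_exp (x := 0))).tendsto
    rwa [dslope_same, Complex.deriv_exp, Complex.exp_zero] at this
  have hsub : ∀ w, Complex.exp w - 1 = w * dslope Complex.exp 0 w := fun w => by
    simpa using (sub_smul_dslope Complex.exp 0 w).symm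
  have hw : Tendsto (fun x => ε x * v x) l (𝓝 0) := by simpa using hε.mul hv
  refine (mul_one L ▸ hv.mul (hslope.comp hw)).congr' ?_
  filter_upwards [hε0] with x hx
  rw [Function.comp_apply, hsub, mul_assoc, mul_div_cancel_left₀ _ hx]

theorem integral_cos_div_one_sub_cos_mul {h : ℝ → ℝ} {a b : ℝ}
    (hint : IntervalIntegrable h volume a b)
    (hint2 : IntervalIntegrable (fun l => |h l| / (1 - cos l)) volume a b) :
    ∫ l in a..b, cos l / (1 - cos l) * h l =
      (∫ l in a..b, h l / (1 - cos l)) - ∫ l in a..b, h l := by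
  have hint3 : IntervalIntegrable (fun l => h l / (1 - cos l)) volume a b := by
    refine hint2.mono_fun (hint.def'.aestronglyMeasurable.aemeasurable.div
      (by fun_prop : Continuous fun l => 1 - cos l).aemeasurable).aestronglyMeasurable
      (ae_of_all _ fun l => ?_)
    simp
  rw [← intervalIntegral.integral_sub hint3 hint]
  refine integral_congr_ae (ae_cos_ne_one.mono fun l hl _ => ?_)
  have hc : 1 - cos l ≠ 0 := sub_ne_zero.2 hl.symm
  field_simp
  ring

/-- Let `h : [−π, π] → ℝ` be even and integrable with `∫ |h|/(1 − cos λ) dλ < ∞`, and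
let `Q(z) = exp((1/2π)∫ ((e^{iλ}+z)/(e^{iλ}−z))·h(λ) dλ)` be the associated outer
function. Then `Q` is analytic on the open unit disk, `Q(r) → 1` as `r → 1⁻`, the
group delay `GD(Q) = lim_{r→1⁻} (Q(r) − 1)/(r − 1)` exists and equals
`−(1/2π)∫ h/(1 − cos λ) dλ`, and with `σ_S²(Q) = exp((1/π)∫ h)` and
`c = (1/2π)∫ (cos λ/(1 − cos λ)) h(λ) dλ` one has `σ_S²(Q) = exp(−2·GD(Q) − 2c)`. -/
theorem stmt_3 (h : ℝ → ℝ) (heven : ∀ l : ℝ, h (-l) = h l)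
    (hint : IntervalIntegrable h volume (-Real.pi) Real.pi)
    (hint2 : IntervalIntegrable (fun l => |h l| / (1 - Real.cos l)) volume
      (-Real.pi) Real.pi)
    (Q : ℂ → ℂ)
    (hQ : Q = fun z => Complex.exp ((1 / (2 * Real.pi) : ℂ) *
      ∫ l in (-Real.pi)..Real.pi,
        ((Complex.exp (Complex.I * l) + z) / (Complex.exp (Complex.I * l) - z)) *
          (h l : ℂ)))
    (GD c : ℝ)
    (hGD : GD = -(1 / (2 * Real.pi)) *
      ∫ l in (-Real.pi)..Real.pi, h l / (1 - Real.cos l))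
    (hc : c = (1 / (2 * Real.pi)) *
      ∫ l in (-Real.pi)..Real.pi, (Real.cos l / (1 - Real.cos l)) * h l) :
    AnalyticOnNhd ℂ Q (Metric.ball 0 1) ∧
    Filter.Tendsto (fun r : ℝ => Q (r : ℂ)) (nhdsWithin 1 (Set.Iio 1)) (nhds 1) ∧
    Filter.Tendsto (fun r : ℝ => (Q (r : ℂ) - 1) / ((r : ℂ) - 1))
      (nhdsWithin 1 (Set.Iio 1)) (nhds (GD : ℂ)) ∧
    Real.exp ((1 / Real.pi) * ∫ l in (-Real.pi)..Real.pi, h l) =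
      Real.exp (-2 * GD - 2 * c) := by
  replace hQ : Q = fun z => Complex.exp ((1 / (2 * π) : ℂ) * herglotzIntegral h z) := hQ
  set v : ℝ → ℂ := fun r =>
    ((-(1 / (2 * π)) * ∫ l in (-π)..π, (1 + r) / (1 - 2 * r * cos l + r ^ 2) * h l : ℝ) : ℂ)
  have hv : Tendsto v (𝓝[<] 1) (𝓝 (GD : ℂ)) := hGD ▸ (Complex.continuous_ofReal.tendsto _).comp
    ((tendsto_integral_one_add_div_mul hint hint2).const_mul _)
  have hε : Tendsto (fun r : ℝ => (r : ℂ) - 1) (𝓝[<] 1) (𝓝 0) := by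
    refine tendsto_nhdsWithin_of_tendsto_nhds ?_
    simpa using (Complex.continuous_ofReal.tendsto (1 : ℝ)).sub_const 1
  have hε0 : ∀ᶠ r : ℝ in 𝓝[<] 1, (r : ℂ) - 1 ≠ 0 := by
    filter_upwards [self_mem_nhdsWithin] with r hr
    exact sub_ne_zero.2 (Complex.ofReal_ne_one.2 (ne_of_lt hr))
  have hQr : (fun r : ℝ => Q r) =ᶠ[𝓝[<] 1] fun r => Complex.exp (((r : ℂ) - 1) * v r) := by
    filter_upwards [Ioo_mem_nhdsLT (show (-1 : ℝ) < 1 by norm_num)] with r hr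
    simp only [hQ, v]
    rw [herglotzIntegral_ofReal_eq_one_sub_mul heven hint (abs_lt.2 hr)]
    push_cast
    congr 1
    ring
  refine ⟨?_, ?_, ?_, ?_⟩
  · rw [hQ]
    exact (analyticOnNhd_const.mul (analyticOnNhd_herglotzIntegral hint)).cexp
  · have := (hε.mul hv).cexp
    rw [zero_mul, Complex.exp_zero] at this
    exact this.congr' hQr.symm
  · refine (tendsto_cexp_mul_sub_one_div hε hε0 hv).congr' ?_
    filter_upwards [hQr] with r hr
    rw [hr]
  · rw [hGD, hc, integral_cos_div_one_sub_cos_mul hint hint2]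
    congr 1
    ring
end

section
/- Let ψ : ℕ → ℝ satisfy Σ_{n≥0} (n+1)·|ψ_n| < ∞ and Σ_{n≥0} ψ_n = 1, and define the autocovariances b_k = Σ_{n≥0} ψ_n ψ_{n+k} for k ≥ 1 (all series converge absolutely). Then the retailer's inventory variance satisfies the exact identity Σ_{n≥0} (Σ_{k=0}^{n−1} ψ_k − 1)² = 1 + Σ_{n≥1} n·ψ_n − Σ_{k≥1} k·b_k; that is, σ_I²(ψ) = 1 + GD(ψ) − (1/2)·∂_r f_ψ(1), where GD(ψ) = Σ_{n≥1} n·ψ_n is the group delay and (1/2)·∂_r f_ψ(1) = Σ_{k≥1} k·b_k is half the radial derivative at 1 of the spectral density's harmonic extension. -/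
/-!
Write `T n = ∑_{a ≥ n} ψ a`, so that `∑_{k<n} ψ k - 1 = -T n`. Expanding the squares,
`∑_n T n ^ 2 = ∑_{a,c} (min a c + 1) ψ a ψ c`, and `min a c + 1 = (a + 1) - (a - c)` in `ℕ`.
The weight `a + 1` factors as `(∑ (n + 1) ψ n) (∑ ψ) = 1 + GD(ψ)`, while re-indexing the
weight `a - c` by the lag `k = a - c ≥ 0` gives `∑_k k b_k`. Absolute convergence of every
rearrangement comes from domination by `(a + 1) |ψ a| |ψ c|`.
-/

open Finset

section

variable {ψ : ℕ → ℝ}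

theorem Summable.norm_of_succ_mul_abs (h : Summable fun n : ℕ => ((n : ℝ) + 1) * |ψ n|) :
    Summable fun n => ‖ψ n‖ :=
  h.of_nonneg_of_le (fun _ => norm_nonneg _)
    fun n => le_mul_of_one_le_left (abs_nonneg _) (by simp)

theorem summable_natCast_mul_mul_of_le_succ (h : Summable fun n : ℕ => ((n : ℝ) + 1) * |ψ n|)
    {w : ℕ × ℕ → ℕ} (hw : ∀ p, w p ≤ p.1 + 1) :
    Summable fun p : ℕ × ℕ => (w p : ℝ) * (ψ p.1 * ψ p.2) := by
  refine .of_norm_bounded (h.mul_of_nonneg h.norm_of_succ_mul_abs (fun n => by positivity)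
    fun n => norm_nonneg _) fun p => ?_
  simp only [norm_mul, Real.norm_eq_abs, Nat.abs_cast]
  rw [← mul_assoc]
  gcongr
  exact_mod_cast hw p

theorem summable_mul_comp_add_right {R : Type*} [NormedRing R] [CompleteSpace R] {f : ℕ → R}
    (h : Summable fun n => ‖f n‖) (k : ℕ) :
    Summable fun n => f n * f (n + k) :=
  (summable_mul_of_summable_norm (f := f) (g := f) h h).comp_injective
    (i := fun n => (n, n + k)) fun _ _ hmn => (Prod.mk.inj hmn).1

theorem sum_range_add_tsum_indicator_Ici {α : Type*} [AddCommGroup α] [TopologicalSpace α]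
    [IsTopologicalAddGroup α] [T2Space α] {f : ℕ → α} (hf : Summable f) (n : ℕ) :
    ∑ k ∈ range n, f k + ∑' k, (Set.Ici n).indicator f k = ∑' k, f k := by
  rw [← _root_.tsum_subtype, ← Set.compl_Iio, ← coe_range]
  exact hf.sum_add_tsum_compl

theorem hasSum_indicator_Ici_mul_indicator_Ici {R : Type*} [Semiring R] [TopologicalSpace R]
    (f : ℕ → R) (a c : ℕ) :
    HasSum (fun n => (Set.Ici n).indicator f a * (Set.Ici n).indicator f c)
      (((min a c + 1 : ℕ) : R) * (f a * f c)) := by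
  have hsum : ∑ n ∈ range (min a c + 1), (Set.Ici n).indicator f a * (Set.Ici n).indicator f c =
      ((min a c + 1 : ℕ) : R) * (f a * f c) := by
    rw [sum_congr rfl fun n hn => ?_, sum_const, card_range, nsmul_eq_mul]
    have : n ≤ a ∧ n ≤ c := by simp only [mem_range] at hn; omega
    simp [this]
  rw [← hsum]
  refine hasSum_sum_of_ne_finset_zero fun n hn => ?_
  have : ¬ n ≤ a ∨ ¬ n ≤ c := by simp only [mem_range] at hn; omega
  rcases this with h | h <;> simp [h]

theorem hasSum_sq_tsum_indicator_Ici (h : Summable fun n : ℕ => ((n : ℝ) + 1) * |ψ n|) :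
    HasSum (fun n => (∑' k, (Set.Ici n).indicator ψ k) ^ 2)
      (∑' p : ℕ × ℕ, ((min p.1 p.2 + 1 : ℕ) : ℝ) * (ψ p.1 * ψ p.2)) := by
  set F : (ℕ × ℕ) × ℕ → ℝ := fun x =>
    (Set.Ici x.2).indicator ψ x.1.1 * (Set.Ici x.2).indicator ψ x.1.2
  have hF : Summable F := by
    refine .of_norm ((summable_prod_of_nonneg fun _ => norm_nonneg _).2 ⟨fun p => ?_, ?_⟩)
    · simp only [F, norm_mul, norm_indicator_eq_indicator_norm]
      exact (hasSum_indicator_Ici_mul_indicator_Ici _ p.1 p.2).summable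
    · simp only [F, norm_mul, norm_indicator_eq_indicator_norm,
        (hasSum_indicator_Ici_mul_indicator_Ici _ _ _).tsum_eq]
      have h' : Summable fun n : ℕ => ((n : ℝ) + 1) * |‖ψ n‖| := by
        simpa only [Real.norm_eq_abs, abs_abs] using h
      exact summable_natCast_mul_mul_of_le_succ h' fun p => Nat.succ_le_succ (min_le_left _ _)
  have hnorm (n : ℕ) : Summable fun k => ‖(Set.Ici n).indicator ψ k‖ := by
    simpa only [norm_indicator_eq_indicator_norm] using h.norm_of_succ_mul_abs.indicator (Set.Ici n)
  have hrow (n : ℕ) :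
      HasSum (fun p : ℕ × ℕ => F (p, n)) ((∑' k, (Set.Ici n).indicator ψ k) ^ 2) := by
    rw [sq, tsum_mul_tsum_of_summable_norm (hnorm n) (hnorm n)]
    exact (hF.comp_injective (i := fun p => (p, n)) fun p q hpq => congrArg Prod.fst hpq).hasSum
  have hcol := hF.hasSum.prod_fiberwise fun p => hasSum_indicator_Ici_mul_indicator_Ici ψ p.1 p.2
  rw [hcol.tsum_eq]
  exact ((Equiv.prodComm _ _).hasSum_iff.2 hF.hasSum).prod_fiberwise hrow

theorem hasSum_natCast_mul_tsum_mul_comp_add_right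
    (h : Summable fun n : ℕ => ((n : ℝ) + 1) * |ψ n|) :
    HasSum (fun k : ℕ => (k : ℝ) * ∑' n, ψ n * ψ (n + k))
      (∑' p : ℕ × ℕ, ((p.1 - p.2 : ℕ) : ℝ) * (ψ p.1 * ψ p.2)) := by
  set G : ℕ × ℕ → ℝ := fun p => ((p.1 - p.2 : ℕ) : ℝ) * (ψ p.1 * ψ p.2)
  have hG : Summable G := summable_natCast_mul_mul_of_le_succ h fun p => by omega
  have hinj : Function.Injective fun q : ℕ × ℕ => (q.2 + q.1, q.2) := by
    rintro ⟨k, n⟩ ⟨k', n'⟩ hq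
    simp only [Prod.mk.injEq] at hq
    ext <;> omega
  have hsupp : ∀ p ∉ Set.range fun q : ℕ × ℕ => (q.2 + q.1, q.2), G p = 0 := by
    rintro ⟨a, c⟩ hp
    have : a - c = 0 := by
      by_contra hac
      exact hp ⟨(a - c, c), Prod.ext (by dsimp only; omega) rfl⟩
    simp [G, this]
  have hshift :
      HasSum (fun q : ℕ × ℕ => (q.1 : ℝ) * (ψ q.2 * ψ (q.2 + q.1))) (∑' p, G p) := by
    refine ((hinj.hasSum_iff hsupp).2 hG.hasSum).congr_fun fun q => ?_
    simp only [G, Function.comp_apply, Nat.add_sub_cancel_left]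
    ring
  exact hshift.prod_fiberwise fun k =>
    ((summable_mul_comp_add_right h.norm_of_succ_mul_abs k).hasSum.mul_left (k : ℝ))

theorem tsum_natCast_min_succ_mul (h : Summable fun n : ℕ => ((n : ℝ) + 1) * |ψ n|) :
    ∑' p : ℕ × ℕ, ((min p.1 p.2 + 1 : ℕ) : ℝ) * (ψ p.1 * ψ p.2) =
      (∑' n : ℕ, ((n : ℝ) + 1) * ψ n) * (∑' n, ψ n) -
        ∑' p : ℕ × ℕ, ((p.1 - p.2 : ℕ) : ℝ) * (ψ p.1 * ψ p.2) := by
  have hmin (p : ℕ × ℕ) : ((min p.1 p.2 + 1 : ℕ) : ℝ) * (ψ p.1 * ψ p.2) =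
      ((p.1 + 1 : ℕ) : ℝ) * (ψ p.1 * ψ p.2) -
        ((p.1 - p.2 : ℕ) : ℝ) * (ψ p.1 * ψ p.2) := by
    rw [← sub_mul, ← Nat.cast_sub (by omega)]
    congr 3
    omega
  have hnorm : Summable fun n : ℕ => ‖((n : ℝ) + 1) * ψ n‖ :=
    h.congr fun n => by rw [norm_mul, Real.norm_eq_abs, Real.norm_eq_abs,
      abs_of_nonneg (by positivity : (0 : ℝ) ≤ n + 1)]
  rw [tsum_congr hmin, (summable_natCast_mul_mul_of_le_succ h fun _ => le_rfl).tsum_sub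
    (summable_natCast_mul_mul_of_le_succ h fun _ => by omega),
    tsum_mul_tsum_of_summable_norm hnorm h.norm_of_succ_mul_abs]
  push_cast
  simp only [mul_assoc]

end

/-- Inventory-breakdown identity for an invertible (outer) policy: if
`Σ (n+1)|ψ_n| < ∞` and `Σ ψ_n = 1`, then with autocovariances
`b_k = Σ_n ψ_n ψ_{n+k}` (absolutely convergent), the inventory variance satisfies
`Σ_{n≥0} (Σ_{k<n} ψ_k − 1)² = 1 + Σ_{n≥1} n·ψ_n − Σ_{k≥1} k·b_k`,
i.e. `σ_I²(ψ) = 1 + GD(ψ) − (1/2)∂_r f_ψ(1)`. -/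
theorem stmt_5 (ψ : ℕ → ℝ)
    (h1 : Summable (fun n : ℕ => ((n : ℝ) + 1) * |ψ n|))
    (h2 : ∑' n : ℕ, ψ n = 1)
    (b : ℕ → ℝ) (hb : ∀ k : ℕ, b k = ∑' n : ℕ, ψ n * ψ (n + k)) :
    (∀ k : ℕ, Summable (fun n : ℕ => ψ n * ψ (n + k))) ∧
    Summable (fun n : ℕ => (∑ k ∈ Finset.range n, ψ k - 1) ^ 2) ∧
    Summable (fun n : ℕ => (n : ℝ) * ψ n) ∧
    Summable (fun k : ℕ => (k : ℝ) * b k) ∧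
    ∑' n : ℕ, (∑ k ∈ Finset.range n, ψ k - 1) ^ 2 =
      1 + (∑' n : ℕ, (n : ℝ) * ψ n) - ∑' k : ℕ, (k : ℝ) * b k := by
  have hψ := h1.norm_of_succ_mul_abs
  have hGD : Summable fun n : ℕ => (n : ℝ) * ψ n :=
    .of_norm_bounded h1 fun n => by
      rw [Real.norm_eq_abs, abs_mul, Nat.abs_cast]
      exact mul_le_mul_of_nonneg_right (by linarith) (abs_nonneg _)
  have htail (n : ℕ) :
      (∑ k ∈ range n, ψ k - 1) ^ 2 = (∑' k, (Set.Ici n).indicator ψ k) ^ 2 := by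
    rw [← h2, ← sum_range_add_tsum_indicator_Ici hψ.of_norm n]
    ring
  have hsucc : ∑' n : ℕ, ((n : ℝ) + 1) * ψ n = ∑' n : ℕ, (n : ℝ) * ψ n + 1 := by
    simp only [add_mul, one_mul]
    rw [hGD.tsum_add hψ.of_norm, h2]
  have hsq := hasSum_sq_tsum_indicator_Ici h1
  have hcov := hasSum_natCast_mul_tsum_mul_comp_add_right h1
  simp only [htail, hb]
  refine ⟨summable_mul_comp_add_right hψ, hsq.summable, hGD, hcov.summable, ?_⟩
  rw [hsq.tsum_eq, hcov.tsum_eq, tsum_natCast_min_succ_mul h1, hsucc, h2]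
  ring
end

section
/- Let Q be a polynomial with real coefficients such that Q(1) = 1 and Q(z) ≠ 0 for all |z| < 1. For a ∈ (−1, 1) let B_a(z) = (z − a)/(1 − a·z), the Blaschke factor normalized so that B_a(1) = 1. Then σ_I²(Q·B_a) = σ_I²(Q) + (1+a)/(1−a), where for a circle function F, σ_I²(F) = (1/2π)∫_{−π}^{π} |(e^{−iλ}F(e^{−iλ}) − 1)/(1 − e^{−iλ})|² dλ. That is, inserting the Blaschke (all-pass) factor B_a increases the retailer's inventory variance by exactly its group delay GD(B_a) = B_a′(1) = (1 − a²)/(1 − a)² = (1+a)/(1−a). -/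
/-!
Since `Q(1) = 1`, `z Q(z) - 1 = (z - 1) R(z)` for a polynomial `R`, so the variance density of
`Q` is `‖R‖²`, and, because `B_a - 1 = (1 + a)(z - 1)/(1 - a z)`, that of `Q B_a` is
`‖B_a R + (1 + a)/(1 - a z)‖²`. Using `conj z = z⁻¹` on the unit circle, the difference of the two
densities is the real part of a function holomorphic on a neighbourhood of the closed unit disc,
so by the mean value property its average over the circle is its value at `0`, `(1 + a)/(1 - a)`.
-/

open MeasureTheory intervalIntegral

/-- Inventory variance of a function on the unit circle:
`σ_I²(F) = (1/2π)∫_{−π}^{π} |(e^{−iλ}F(e^{−iλ}) − 1)/(1 − e^{−iλ})|² dλ`. -/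
noncomputable def sigmaI2c (F : ℝ → ℂ) : ℝ :=
  (1 / (2 * Real.pi)) * ∫ l in (-Real.pi)..Real.pi,
    ‖(Complex.exp (-Complex.I * l) * F l - 1) / (1 - Complex.exp (-Complex.I * l))‖ ^ 2

open Complex Polynomial ComplexConjugate Real Filter Metric

theorem integral_comp_exp_neg_mul_I_eq_circleAverage {E : Type*} [NormedAddCommGroup E]
    [NormedSpace ℝ E] [CompleteSpace E] (f : ℂ → E) :
    (2 * π)⁻¹ • ∫ l in (-π)..π, f (exp (-I * l)) = circleAverage f 0 1 := by
  have hcirc : ∀ l : ℝ, exp (-I * l) = circleMap 0 1 (-l) := fun l => by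
    simp [circleMap_zero, mul_comm]
  simp_rw [hcirc, circleAverage_eq_integral_add (-π)]
  rw [intervalIntegral.integral_comp_neg (fun l => f (circleMap 0 1 l)),
    intervalIntegral.integral_comp_add_right (fun l => f (circleMap 0 1 l))]
  ring_nf

theorem sigmaI2c_eq_circleAverage (g : ℂ → ℂ) :
    sigmaI2c (fun l => g (exp (-I * l))) =
      circleAverage (fun z => ‖(z * g z - 1) / (1 - z)‖ ^ 2) 0 1 := by
  rw [← integral_comp_exp_neg_mul_I_eq_circleAverage, sigmaI2c, smul_eq_mul, one_div]

theorem circleAverage_congr_of_eqOn_sphere_diff_singleton {E : Type*} [NormedAddCommGroup E]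
    [NormedSpace ℝ E] {f g : ℂ → E} {c w : ℂ} {R : ℝ} (hR : R ≠ 0)
    (h : Set.EqOn f g (sphere c |R| \ {w})) : circleAverage f c R = circleAverage g c R := by
  refine circleAverage_congr_codiscreteWithin ?_ hR
  filter_upwards [self_mem_codiscreteWithin _, compl_singleton_mem_codiscreteWithin w]
    with z hzS hzw using h ⟨hzS, hzw⟩

theorem X_sub_one_dvd_X_mul_sub_one {R : Type*} [CommRing R] {Q : R[X]} (hQ : Q.eval 1 = 1) :
    X - 1 ∣ X * Q - 1 := by
  simpa using (dvd_iff_isRoot (a := (1 : R)) (p := X * Q - 1)).mpr (by simp [hQ])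

noncomputable def blaschke (a : ℝ) (z : ℂ) : ℂ := (z - a) / (1 - a * z)

/-- On the unit circle, `‖B_a r + (1 + a)/(1 - a z)‖² = ‖r‖² + Re (blaschkeExcess a z r)`: the
first summand comes from the cross term, the second from `‖(1 + a)/(1 - a z)‖²`, which is
`(1 + a)/(1 - a)` times the Poisson kernel `Re ((1 + a z)/(1 - a z)) = (1 - a²)/‖1 - a z‖²`. -/
noncomputable def blaschkeExcess (a : ℝ) (z r : ℂ) : ℂ :=
  (1 + a) / (1 - a * z) * (2 * z * r + (1 + a * z) / (1 - a))

theorem one_sub_ofReal_mul_ne_zero {a : ℝ} (ha : |a| < 1) {z : ℂ} (hz : ‖z‖ ≤ 1) :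
    1 - a * z ≠ 0 := by
  rw [sub_ne_zero]
  intro h
  have hlt : ‖(a : ℂ) * z‖ < 1 := by
    rw [norm_mul, norm_real, Real.norm_eq_abs]
    nlinarith [abs_nonneg a, norm_nonneg z]
  simp [← h] at hlt

theorem blaschke_mul_add_mul_blaschke_inv_mul_add {a : ℝ} {z r s : ℂ} (hz : z ≠ 0)
    (haz : 1 - a * z ≠ 0) (hza : z - a ≠ 0) (ha : a ≠ 1) :
    (blaschke a z * r + (1 + a) / (1 - a * z)) *
        (blaschke a z⁻¹ * s + (1 + a) / (1 - a * z⁻¹)) =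
      r * s + (blaschkeExcess a z r + blaschkeExcess a z⁻¹ s) / 2 := by
  have haz' : 1 - z * a ≠ 0 := by rwa [mul_comm]
  have haz_inv : 1 - a * z⁻¹ ≠ 0 := by
    rw [show 1 - (a : ℂ) * z⁻¹ = (z - a) / z by field_simp]
    exact div_ne_zero hza hz
  have ha' : (1 : ℂ) - a ≠ 0 := sub_ne_zero.mpr (by exact_mod_cast ha.symm)
  simp only [blaschke, blaschkeExcess]
  field_simp
  ring

theorem norm_sub_one_div_one_sub_mul_blaschke_sq {a : ℝ} (ha : |a| < 1) {z q r : ℂ}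
    (hz : ‖z‖ = 1) (hz1 : z ≠ 1) (hqr : z * q - 1 = (z - 1) * r) :
    ‖(z * (q * blaschke a z) - 1) / (1 - z)‖ ^ 2 = ‖r‖ ^ 2 + (blaschkeExcess a z r).re := by
  have hz0 : z ≠ 0 := by rintro rfl; simp at hz
  have haz := one_sub_ofReal_mul_ne_zero ha hz.le
  have hza : z - a ≠ 0 := by
    rw [sub_ne_zero]; rintro rfl
    rw [norm_real, Real.norm_eq_abs] at hz
    linarith
  have ha1 : a ≠ 1 := by rintro rfl; simp at ha
  have hG : (z * (q * blaschke a z) - 1) / (1 - z) =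
      -(blaschke a z * r + (1 + a) / (1 - a * z)) := by
    have : 1 - z ≠ 0 := sub_ne_zero.mpr (Ne.symm hz1)
    have : 1 - z * a ≠ 0 := by rwa [mul_comm]
    simp only [blaschke]
    field_simp
    linear_combination (z - a) * hqr
  have hconj : conj (blaschke a z * r + (1 + a) / (1 - a * z)) =
      blaschke a z⁻¹ * conj r + (1 + a) / (1 - a * z⁻¹) := by
    simp only [blaschke, inv_eq_conj hz, map_div₀, map_mul, map_add, map_sub, map_one,
      conj_ofReal]
  have hconj_excess : conj (blaschkeExcess a z r) = blaschkeExcess a z⁻¹ (conj r) := by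
    simp only [blaschkeExcess, inv_eq_conj hz, map_div₀, map_mul, map_add, map_sub, map_one,
      map_ofNat, conj_ofReal]
  have hnorm : ∀ w : ℂ, ‖w‖ ^ 2 = (w * conj w).re := fun w => by rw [mul_conj']; norm_cast
  have hre : ∀ w : ℂ, w.re = ((w + conj w) / 2).re := fun w => by simp
  rw [hG, norm_neg, hnorm, hnorm r, hconj,
    blaschke_mul_add_mul_blaschke_inv_mul_add hz0 haz hza ha1, hre (blaschkeExcess a z r),
    hconj_excess, add_re]

theorem differentiableOn_blaschkeExcess {a : ℝ} (ha : |a| < 1) {f : ℂ → ℂ}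
    (hf : Differentiable ℂ f) :
    DifferentiableOn ℂ (fun z => blaschkeExcess a z (f z)) (closedBall 0 1) := by
  intro z hz
  have haz := one_sub_ofReal_mul_ne_zero ha (by simpa using hz)
  have ha' : (1 : ℂ) - a ≠ 0 := by simpa using one_sub_ofReal_mul_ne_zero ha (z := 1) (by simp)
  have hfz := hf z
  apply DifferentiableAt.differentiableWithinAt
  unfold blaschkeExcess
  fun_prop (disch := assumption)

theorem circleIntegrable_re_blaschkeExcess {a : ℝ} (ha : |a| < 1) {f : ℂ → ℂ}
    (hf : Differentiable ℂ f) :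
    CircleIntegrable (fun z => (blaschkeExcess a z (f z)).re) 0 1 :=
  (continuous_re.comp_continuousOn ((differentiableOn_blaschkeExcess ha hf).continuousOn.mono
    sphere_subset_closedBall)).circleIntegrable zero_le_one

theorem circleAverage_re_blaschkeExcess {a : ℝ} (ha : |a| < 1) {f : ℂ → ℂ}
    (hf : Differentiable ℂ f) :
    circleAverage (fun z => (blaschkeExcess a z (f z)).re) 0 1 = (1 + a) / (1 - a) := by
  have hd := differentiableOn_blaschkeExcess ha hf
  have hre := reCLM.circleAverage_comp_comm (f := fun z => blaschkeExcess a z (f z))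
    (c := 0) (R := 1) ((hd.continuousOn.mono sphere_subset_closedBall).circleIntegrable zero_le_one)
  have hmean := (hd.diffContOnCl_ball (by simp)).circleAverage (c := 0) (R := 1)
  have hzero : blaschkeExcess a 0 (f 0) = ((1 + a) / (1 - a) : ℝ) := by
    simp only [blaschkeExcess, mul_zero, sub_zero, div_one]
    push_cast
    ring
  simp only [Function.comp_def, reCLM_apply] at hre
  rw [hre, hmean, hzero, ofReal_re]

theorem stmt_7_general (Q : Polynomial ℝ)
    (hQ1 : Polynomial.aeval (1 : ℂ) Q = 1)
    (a : ℝ) (ha : -1 < a) (ha' : a < 1) :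
    sigmaI2c (fun l => Polynomial.aeval (Complex.exp (-Complex.I * l)) Q *
        ((Complex.exp (-Complex.I * l) - (a : ℂ)) /
          (1 - (a : ℂ) * Complex.exp (-Complex.I * l)))) =
      sigmaI2c (fun l => Polynomial.aeval (Complex.exp (-Complex.I * l)) Q) +
        (1 + a) / (1 - a) := by
  have habs : |a| < 1 := abs_lt.mpr ⟨ha, ha'⟩
  rw [aeval_def, eval₂_at_one, coe_algebraMap, ofReal_eq_one] at hQ1
  obtain ⟨R, hR⟩ := X_sub_one_dvd_X_mul_sub_one hQ1
  have hfac : ∀ z : ℂ, z * aeval z Q - 1 = (z - 1) * aeval z R := fun z => by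
    simpa using congrArg (aeval z) hR
  have hR_int : CircleIntegrable (fun z => ‖aeval z R‖ ^ 2) 0 1 :=
    (by fun_prop : Continuous fun z : ℂ => ‖aeval z R‖ ^ 2).continuousOn.circleIntegrable'
  simp_rw [← blaschke.eq_1]
  rw [sigmaI2c_eq_circleAverage (fun z => aeval z Q * blaschke a z),
    sigmaI2c_eq_circleAverage (fun z => aeval z Q)]
  calc circleAverage (fun z => ‖(z * (aeval z Q * blaschke a z) - 1) / (1 - z)‖ ^ 2) 0 1
      = circleAverage (fun z => ‖aeval z R‖ ^ 2 + (blaschkeExcess a z (aeval z R)).re) 0 1 :=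
        circleAverage_congr_of_eqOn_sphere_diff_singleton one_ne_zero fun z ⟨hz, hz1⟩ =>
          norm_sub_one_div_one_sub_mul_blaschke_sq habs (by simpa using hz) hz1 (hfac z)
    _ = circleAverage (fun z => ‖aeval z R‖ ^ 2) 0 1 + (1 + a) / (1 - a) := by
        rw [circleAverage_fun_add hR_int
            (circleIntegrable_re_blaschkeExcess habs R.differentiable_aeval),
          circleAverage_re_blaschkeExcess habs R.differentiable_aeval]
    _ = circleAverage (fun z => ‖(z * aeval z Q - 1) / (1 - z)‖ ^ 2) 0 1 + (1 + a) / (1 - a) := by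
        congr 1
        refine circleAverage_congr_of_eqOn_sphere_diff_singleton (w := 1) one_ne_zero
          fun z ⟨_, hz1⟩ => ?_
        have hz1' : 1 - z ≠ 0 := sub_ne_zero.mpr (Ne.symm hz1)
        rw [hfac, ← neg_sub, neg_mul, neg_div, mul_div_cancel_left₀ _ hz1', norm_neg]

/-- For a real polynomial `Q` with `Q(1) = 1` and no zeros in the open unit disk, and
`a ∈ (−1, 1)`, inserting the Blaschke factor `B_a(z) = (z − a)/(1 − a·z)` increases the
inventory variance by exactly its group delay `(1+a)/(1−a)`:
`σ_I²(Q·B_a) = σ_I²(Q) + (1+a)/(1−a)`. -/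
theorem stmt_7 (Q : Polynomial ℝ)
    (hQ1 : Polynomial.aeval (1 : ℂ) Q = 1)
    (hQ0 : ∀ z : ℂ, ‖z‖ < 1 → Polynomial.aeval z Q ≠ 0)
    (a : ℝ) (ha : -1 < a) (ha' : a < 1) :
    sigmaI2c (fun l => Polynomial.aeval (Complex.exp (-Complex.I * l)) Q *
        ((Complex.exp (-Complex.I * l) - (a : ℂ)) /
          (1 - (a : ℂ) * Complex.exp (-Complex.I * l)))) =
      sigmaI2c (fun l => Polynomial.aeval (Complex.exp (-Complex.I * l)) Q) +
        (1 + a) / (1 - a) :=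
  stmt_7_general Q hQ1 a ha ha'
end
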